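/- arXiv:2209.10154 — 3 statements merged into one kernel-verified Lean document; each statement's English description precedes it below -/
import Mathlib

section
/- Let μ > 2, let δ > 0 be the unique positive root of μ log(1+δ) = 2δ, and let δ₁ ∈ (0, min{μ/2 - 1, δ}]. Define λ₊(r) := (-μ log(1+r) + √(μ² log²(1+r) - 4r²))/2 for r ∈ [0, δ₁]. Then there exist constants c ≥ d > 0 such that -c·r ≤ λ₊(r) ≤ -d·r for all r ∈ [0, δ₁]. -/
/-!
Write `L = log (1 + r)`, so that `λ₊(r)` is the larger root of `x² + μ L x + r² = 0`. A bound
`λ₊ ≤ -s` (resp. `-s ≤ λ₊`) amounts, after squaring, to `μ L s ≤ r² + s²` (resp. the reverse).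
Both follow from `r / (1 + r) ≤ L ≤ r`, taking `s = r / μ` and `s = 2 (1 + δ₁) r / μ`; the
second choice uses `2 (1 + δ₁) ≤ μ`.
-/

open Real

lemma neg_add_sqrt_div_two_le_neg {b q s : ℝ} (hs : 2 * s ≤ b) (h : b * s ≤ q + s ^ 2) :
    (-b + √(b ^ 2 - 4 * q)) / 2 ≤ -s := by
  have : √(b ^ 2 - 4 * q) ≤ b - 2 * s := by
    calc √(b ^ 2 - 4 * q) ≤ √((b - 2 * s) ^ 2) := Real.sqrt_le_sqrt (by nlinarith)
      _ = b - 2 * s := Real.sqrt_sq (by linarith)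
  linarith

lemma neg_le_neg_add_sqrt_div_two {b q s : ℝ} (h : q + s ^ 2 ≤ b * s) :
    -s ≤ (-b + √(b ^ 2 - 4 * q)) / 2 := by
  have : b - 2 * s ≤ √(b ^ 2 - 4 * q) := by
    calc b - 2 * s ≤ |b - 2 * s| := le_abs_self _
      _ = √((b - 2 * s) ^ 2) := (Real.sqrt_sq_eq_abs _).symm
      _ ≤ √(b ^ 2 - 4 * q) := Real.sqrt_le_sqrt (by nlinarith)
  linarith

lemma log_one_add_le_self {r : ℝ} (hr : -1 < r) : log (1 + r) ≤ r := by
  linarith [log_le_sub_one_of_pos (by linarith : 0 < 1 + r)]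

lemma le_one_add_mul_log_one_add {r : ℝ} (hr : -1 < r) : r ≤ (1 + r) * log (1 + r) := by
  have h1r : 0 < 1 + r := by linarith
  have h := one_sub_inv_le_log_of_pos h1r
  have : (1 + r) * (1 - (1 + r)⁻¹) = r := by field_simp; ring
  nlinarith [mul_le_mul_of_nonneg_left h h1r.le]

theorem stmt4_general (μ δ δ₁ : ℝ)
    (hδ₁ : 0 < δ₁) (hδ₁le : δ₁ ≤ min (μ / 2 - 1) δ) :
    ∃ c d : ℝ, 0 < d ∧ d ≤ c ∧ ∀ r ∈ Set.Icc (0:ℝ) δ₁,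
      -c * r ≤ (-(μ * Real.log (1 + r)) +
          Real.sqrt (μ ^ 2 * Real.log (1 + r) ^ 2 - 4 * r ^ 2)) / 2 ∧
      (-(μ * Real.log (1 + r)) +
          Real.sqrt (μ ^ 2 * Real.log (1 + r) ^ 2 - 4 * r ^ 2)) / 2 ≤ -d * r := by
  have hμδ₁ : 2 * (1 + δ₁) ≤ μ := by linarith [hδ₁le.trans (min_le_left _ _)]
  have hμ : 0 < μ := by linarith
  refine ⟨2 * (1 + δ₁) / μ, 1 / μ, by positivity, by gcongr; linarith, ?_⟩
  rintro r ⟨hr0, hrδ₁⟩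
  set L := log (1 + r)
  have hL_le : L ≤ r := log_one_add_le_self (by linarith)
  have hL_ge : r ≤ (1 + δ₁) * L :=
    (le_one_add_mul_log_one_add (by linarith)).trans
      (mul_le_mul_of_nonneg_right (by linarith) (log_nonneg (by linarith)))
  have hμL : 2 * r ≤ μ * L := by nlinarith
  rw [← mul_pow, neg_mul, neg_mul]
  constructor
  · apply neg_le_neg_add_sqrt_div_two
    have hc : 2 * (1 + δ₁) / μ ≤ 1 := (div_le_one hμ).2 hμδ₁
    have hc0 : 0 ≤ 2 * (1 + δ₁) / μ := by positivity
    have : μ * L * (2 * (1 + δ₁) / μ * r) = 2 * ((1 + δ₁) * L) * r := by field_simp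
    rw [this, mul_pow]
    nlinarith [mul_le_one₀ hc hc0 hc]
  · apply neg_add_sqrt_div_two_le_neg
    · have : 1 / μ * r ≤ r := by
        rw [one_div_mul_eq_div, div_le_iff₀ hμ]; nlinarith
      linarith
    · have : μ * L * (1 / μ * r) = L * r := by field_simp
      rw [this]
      nlinarith [sq_nonneg (1 / μ * r)]

/-- Lemma 3.1 (2): for `μ > 2` and `δ₁ ∈ (0, min (μ/2 - 1) δ]`, there are constants
`c ≥ d > 0` such that `-c r ≤ λ₊(r) ≤ -d r` on `[0, δ₁]`. -/
theorem stmt4 (μ δ δ₁ : ℝ) (hμ : 2 < μ) (hδ : 0 < δ)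
    (hroot : μ * Real.log (1 + δ) = 2 * δ)
    (hδ₁ : 0 < δ₁) (hδ₁le : δ₁ ≤ min (μ / 2 - 1) δ) :
    ∃ c d : ℝ, 0 < d ∧ d ≤ c ∧ ∀ r ∈ Set.Icc (0:ℝ) δ₁,
      -c * r ≤ (-(μ * Real.log (1 + r)) +
          Real.sqrt (μ ^ 2 * Real.log (1 + r) ^ 2 - 4 * r ^ 2)) / 2 ∧
      (-(μ * Real.log (1 + r)) +
          Real.sqrt (μ ^ 2 * Real.log (1 + r) ^ 2 - 4 * r ^ 2)) / 2 ≤ -d * r :=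
  stmt4_general μ δ δ₁ hδ₁ hδ₁le
end

section
/- Let n ≥ 1 and μ ∈ (0, 2). For ξ ∈ ℝⁿ \ {0} write r := |ξ| and b(r) := √(r² - (μ²/4) log²(1+r)), and define ν(t,ξ) := (1+r)^{-μt/2} (1/b(r)) sin(b(r) t) and χ(t,ξ) := (1+r)^{-μt/2} (1/b(r)) sin(γ t r), where γ := √(4-μ²)/2. Then there exist constants C > 0 and t₀ > 0, depending only on n and μ, such that for all t ≥ t₀: ∫_{ℝⁿ} |ν(t,ξ) - χ(t,ξ)|² dξ ≤ C t^{-n}. -/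
/-!
Since `|sin x - sin y| ≤ |x - y|`, `b(r) ≥ γ r` and `b(r) - γ r = (b² - γ² r²) / (b + γ r) = O(r²)`,
one has `|ν - χ|² ≤ K² t² r² (1 + r)^(-μt)` with `K = μ² / (4 - μ²)`. The substitution
`ξ = η / s`, `s = μ t`, turns `∫ |ξ|² (1 + |ξ|)^(-s) dξ` into `s^(-(n+2)) ∫ |η|² (1 + |η|/s)^(-s) dη`,
and `(1 + x/s)^(-s)` decreases in `s` (Bernoulli's inequality), so the last integral is at most its
finite value at `s₀ = n + 3`. The factor `t² s^(-(n+2))` is then a multiple of `t^(-n)`.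
-/

open MeasureTheory Real Set Module

lemma one_add_div_rpow_neg_le_of_le {x s s' : ℝ} (hx : 0 ≤ x) (hs : 0 < s) (hss' : s ≤ s') :
    (1 + x / s') ^ (-s') ≤ (1 + x / s) ^ (-s) := by
  have hs' : 0 < s' := hs.trans_le hss'
  have hbern : 1 + x / s ≤ (1 + x / s') ^ (s' / s) := by
    have := one_add_mul_self_le_rpow_one_add (s := x / s') (by linarith [div_nonneg hx hs'.le])
      ((one_le_div hs).2 hss')
    rwa [show s' / s * (x / s') = x / s by field_simp] at this
  calc (1 + x / s') ^ (-s') = ((1 + x / s') ^ (s' / s)) ^ (-s) := by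
        rw [← rpow_mul (by positivity)]; congr 1; field_simp
    _ ≤ (1 + x / s) ^ (-s) :=
        rpow_le_rpow_of_nonpos (by positivity) hbern (by linarith)

section Scaling

variable {E : Type*} [NormedAddCommGroup E] [NormedSpace ℝ E]

lemma norm_inv_smul_pow_mul_one_add_rpow_neg {s : ℝ} (hs : 0 < s) (k : ℕ) (p : ℝ) (x : E) :
    ‖s⁻¹ • x‖ ^ k * (1 + ‖s⁻¹ • x‖) ^ (-p) = (s ^ k)⁻¹ * (‖x‖ ^ k * (1 + ‖x‖ / s) ^ (-p)) := by
  rw [norm_smul, norm_inv, norm_of_nonneg hs.le, inv_mul_eq_div s ‖x‖, div_pow, div_eq_inv_mul,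
    mul_assoc]

variable [FiniteDimensional ℝ E] [MeasurableSpace E] [BorelSpace E] (μ : Measure E)
  [μ.IsAddHaarMeasure]

lemma integrable_norm_pow_mul_one_add_norm_rpow_neg (k : ℕ) {s : ℝ}
    (hs : finrank ℝ E + k < s) : Integrable (fun x : E ↦ ‖x‖ ^ k * (1 + ‖x‖) ^ (-s)) μ := by
  refine (integrable_one_add_norm (μ := μ) (r := s - k) (by linarith)).mono' (by fun_prop) ?_
  refine .of_forall fun x ↦ ?_
  have hx : 0 < 1 + ‖x‖ := by positivity
  calc ‖‖x‖ ^ k * (1 + ‖x‖) ^ (-s)‖ = ‖x‖ ^ k * (1 + ‖x‖) ^ (-s) :=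
        norm_of_nonneg (by positivity)
    _ ≤ (1 + ‖x‖) ^ k * (1 + ‖x‖) ^ (-s) := by gcongr; linarith
    _ = (1 + ‖x‖) ^ (-(s - k)) := by
        rw [← rpow_natCast, ← rpow_add hx]; ring_nf

lemma integral_norm_pow_mul_one_add_norm_rpow_neg_eq (k : ℕ) {s : ℝ} (hs : 0 < s) :
    ∫ x, ‖x‖ ^ k * (1 + ‖x‖) ^ (-s) ∂μ =
      s ^ (-(finrank ℝ E + k : ℝ)) * ∫ x, ‖x‖ ^ k * (1 + ‖x‖ / s) ^ (-s) ∂μ := by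
  have h := Measure.integral_comp_inv_smul_of_nonneg μ (fun x : E ↦ ‖x‖ ^ k * (1 + ‖x‖) ^ (-s)) hs.le
  simp only [norm_inv_smul_pow_mul_one_add_rpow_neg hs, integral_const_mul, smul_eq_mul] at h
  rw [rpow_neg hs.le, rpow_add hs, rpow_natCast, rpow_natCast, mul_inv, mul_assoc, h, ← mul_assoc,
    inv_mul_cancel₀ (by positivity), one_mul]

lemma integral_norm_pow_mul_one_add_norm_rpow_neg_le (k : ℕ) {s₀ s : ℝ}
    (hs₀ : finrank ℝ E + k < s₀) (hs : s₀ ≤ s) :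
    ∫ x, ‖x‖ ^ k * (1 + ‖x‖) ^ (-s) ∂μ ≤
      s ^ (-(finrank ℝ E + k : ℝ)) * ∫ x, ‖x‖ ^ k * (1 + ‖x‖ / s₀) ^ (-s₀) ∂μ := by
  have hs₀pos : 0 < s₀ := lt_of_le_of_lt (by positivity) hs₀
  have hint : Integrable (fun x : E ↦ ‖x‖ ^ k * (1 + ‖x‖ / s₀) ^ (-s₀)) μ := by
    have := ((integrable_norm_pow_mul_one_add_norm_rpow_neg μ k hs₀).comp_smul
      (inv_ne_zero hs₀pos.ne')).const_mul (s₀ ^ k)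
    simp only [norm_inv_smul_pow_mul_one_add_rpow_neg hs₀pos] at this
    simpa only [← mul_assoc, mul_inv_cancel₀ (pow_ne_zero k hs₀pos.ne'), one_mul] using this
  have hspos : 0 < s := hs₀pos.trans_le hs
  rw [integral_norm_pow_mul_one_add_norm_rpow_neg_eq μ k hspos]
  refine mul_le_mul_of_nonneg_left ?_ (rpow_nonneg hspos.le _)
  have hbase : ∀ x : E, 0 ≤ 1 + ‖x‖ / s := fun x ↦ by positivity
  refine integral_mono_of_nonneg (.of_forall fun x ↦ mul_nonneg (by positivity)
    (rpow_nonneg (hbase x) _)) hint (.of_forall fun x ↦ ?_)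
  exact mul_le_mul_of_nonneg_left (one_add_div_rpow_neg_le_of_le (norm_nonneg x) hs₀pos hs)
    (by positivity)

end Scaling

lemma sq_sub_log_one_add_sq_le {r : ℝ} (hr : 0 ≤ r) : r ^ 2 - log (1 + r) ^ 2 ≤ 2 * r ^ 3 := by
  have h1r : 0 < 1 + r := by linarith
  have hL₀ : 0 ≤ log (1 + r) := log_nonneg (by linarith)
  have hLr : log (1 + r) ≤ r := by linarith [log_le_sub_one_of_pos h1r]
  have hrL : r - log (1 + r) ≤ r ^ 2 := by
    have hlow : r / (1 + r) ≤ log (1 + r) := by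
      have := one_sub_inv_le_log_of_pos h1r
      rwa [show 1 - (1 + r)⁻¹ = r / (1 + r) by field_simp; ring] at this
    have : r - r / (1 + r) ≤ r ^ 2 := by
      rw [show r - r / (1 + r) = r ^ 2 / (1 + r) by field_simp; ring]
      exact div_le_self (sq_nonneg r) (by linarith)
    linarith
  calc r ^ 2 - log (1 + r) ^ 2 = (r - log (1 + r)) * (r + log (1 + r)) := by ring
    _ ≤ r ^ 2 * (2 * r) := mul_le_mul hrL (by linarith) (by linarith) (sq_nonneg r)
    _ = 2 * r ^ 3 := by ring

noncomputable def dampedFreq (μ r : ℝ) : ℝ := √(r ^ 2 - μ ^ 2 / 4 * log (1 + r) ^ 2)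

noncomputable def dampedFreqSlope (μ : ℝ) : ℝ := √(4 - μ ^ 2) / 2

section DampedFreq

variable {μ t r : ℝ}

lemma dampedFreq_nonneg : 0 ≤ dampedFreq μ r := sqrt_nonneg _

lemma dampedFreqSlope_pos (hμ : μ ^ 2 < 4) : 0 < dampedFreqSlope μ :=
  div_pos (sqrt_pos.2 (by linarith)) two_pos

lemma dampedFreqSlope_sq (hμ : μ ^ 2 ≤ 4) : dampedFreqSlope μ ^ 2 = 1 - μ ^ 2 / 4 := by
  rw [dampedFreqSlope, div_pow, sq_sqrt (by linarith)]; ring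

lemma dampedFreqSlope_sq_mul_le (hμ : μ ^ 2 ≤ 4) (hr : 0 ≤ r) :
    (dampedFreqSlope μ * r) ^ 2 ≤ r ^ 2 - μ ^ 2 / 4 * log (1 + r) ^ 2 := by
  have h1r : 0 < 1 + r := by linarith
  have hL : log (1 + r) ^ 2 ≤ r ^ 2 :=
    pow_le_pow_left₀ (log_nonneg (by linarith)) (by linarith [log_le_sub_one_of_pos h1r]) 2
  rw [mul_pow, dampedFreqSlope_sq hμ]
  nlinarith [sq_nonneg μ]

lemma dampedFreq_sq (hμ : μ ^ 2 ≤ 4) (hr : 0 ≤ r) :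
    dampedFreq μ r ^ 2 = r ^ 2 - μ ^ 2 / 4 * log (1 + r) ^ 2 :=
  sq_sqrt ((sq_nonneg _).trans (dampedFreqSlope_sq_mul_le hμ hr))

lemma dampedFreqSlope_mul_le (hμ : μ ^ 2 ≤ 4) (hr : 0 ≤ r) :
    dampedFreqSlope μ * r ≤ dampedFreq μ r :=
  le_sqrt_of_sq_le (dampedFreqSlope_sq_mul_le hμ hr)

lemma dampedFreq_sub_dampedFreqSlope_mul_le (hμ : μ ^ 2 < 4) (hr : 0 ≤ r) :
    dampedFreq μ r - dampedFreqSlope μ * r ≤ μ ^ 2 / (4 - μ ^ 2) * r * dampedFreq μ r := by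
  rcases hr.eq_or_lt with rfl | hr
  · simp [dampedFreq]
  set b := dampedFreq μ r
  set γ := dampedFreqSlope μ
  have hγ : 0 < γ := dampedFreqSlope_pos hμ
  have hγb : γ * r ≤ b := dampedFreqSlope_mul_le hμ.le hr.le
  have hKγ : μ ^ 2 / (4 - μ ^ 2) * γ ^ 2 = μ ^ 2 / 4 := by
    rw [dampedFreqSlope_sq hμ.le]; field_simp [show (4 : ℝ) - μ ^ 2 ≠ 0 by linarith]
  have hγr : 0 < γ * r := mul_pos hγ hr
  -- `(b - γ r)(b + γ r) = (μ²/4)(r² - log²(1 + r)) ≤ (μ²/2) r³ ≤ K r b (b + γ r)`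
  have hprod : (b - γ * r) * (b + γ * r) ≤ μ ^ 2 / (4 - μ ^ 2) * r * b * (b + γ * r) := by
    have hdiff : (b - γ * r) * (b + γ * r) = μ ^ 2 / 4 * (r ^ 2 - log (1 + r) ^ 2) := by
      rw [show (b - γ * r) * (b + γ * r) = b ^ 2 - γ ^ 2 * r ^ 2 by ring, dampedFreq_sq hμ.le hr.le,
        dampedFreqSlope_sq hμ.le]
      ring
    have hb2 : 2 * (γ * r) ^ 2 ≤ b * (b + γ * r) := by
      nlinarith [mul_le_mul hγb hγb hγr.le (hγr.le.trans hγb)]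
    calc (b - γ * r) * (b + γ * r) ≤ μ ^ 2 / 4 * (2 * r ^ 3) := by
          rw [hdiff]; gcongr; exact sq_sub_log_one_add_sq_le hr.le
      _ = μ ^ 2 / (4 - μ ^ 2) * r * (2 * (γ * r) ^ 2) := by rw [← hKγ]; ring
      _ ≤ μ ^ 2 / (4 - μ ^ 2) * r * b * (b + γ * r) := by
          rw [mul_assoc _ b]; gcongr
  exact le_of_mul_le_mul_right hprod (by linarith)


lemma abs_sin_sub_sin_div_dampedFreq_le (hμ : μ ^ 2 < 4) (ht : 0 ≤ t) (hr : 0 ≤ r) :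
    |sin (dampedFreq μ r * t) - sin (dampedFreqSlope μ * t * r)| / dampedFreq μ r ≤
      μ ^ 2 / (4 - μ ^ 2) * t * r := by
  have hK : 0 ≤ μ ^ 2 / (4 - μ ^ 2) := div_nonneg (sq_nonneg μ) (by linarith)
  refine div_le_of_le_mul₀ dampedFreq_nonneg (by positivity) ?_
  calc |sin (dampedFreq μ r * t) - sin (dampedFreqSlope μ * t * r)|
      ≤ |dampedFreq μ r * t - dampedFreqSlope μ * t * r| := abs_sin_sub_sin_le _ _
    _ = t * (dampedFreq μ r - dampedFreqSlope μ * r) := by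
        rw [← abs_of_nonneg (mul_nonneg ht (sub_nonneg.2 (dampedFreqSlope_mul_le hμ.le hr)))]
        ring_nf
    _ ≤ t * (μ ^ 2 / (4 - μ ^ 2) * r * dampedFreq μ r) :=
        mul_le_mul_of_nonneg_left (dampedFreq_sub_dampedFreqSlope_mul_le hμ hr) ht
    _ = μ ^ 2 / (4 - μ ^ 2) * t * r * dampedFreq μ r := by ring

lemma sq_abs_damped_sin_sub_le (hμ : μ ^ 2 < 4) (ht : 0 ≤ t) (hr : 0 ≤ r) :
    |(1 + r) ^ (-(μ * t) / 2) * (1 / dampedFreq μ r) * sin (dampedFreq μ r * t)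
        - (1 + r) ^ (-(μ * t) / 2) * (1 / dampedFreq μ r) * sin (dampedFreqSlope μ * t * r)| ^ 2
      ≤ (μ ^ 2 / (4 - μ ^ 2) * t) ^ 2 * (r ^ 2 * (1 + r) ^ (-(μ * t))) := by
  set b := dampedFreq μ r
  set P := (1 + r) ^ (-(μ * t) / 2)
  have hP : 0 ≤ P := rpow_nonneg (by linarith) _
  have hP2 : P ^ 2 = (1 + r) ^ (-(μ * t)) := by
    rw [← rpow_natCast, ← rpow_mul (by linarith)]; ring_nf
  have hfactor : |P * (1 / b) * sin (b * t) - P * (1 / b) * sin (dampedFreqSlope μ * t * r)|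
      = P * (|sin (b * t) - sin (dampedFreqSlope μ * t * r)| / b) := by
    rw [show P * (1 / b) * sin (b * t) - P * (1 / b) * sin (dampedFreqSlope μ * t * r)
        = P * ((sin (b * t) - sin (dampedFreqSlope μ * t * r)) / b) by ring,
      abs_mul, abs_div, abs_of_nonneg hP, abs_of_nonneg dampedFreq_nonneg]
  rw [hfactor, mul_pow, hP2]
  calc (1 + r) ^ (-(μ * t)) * (|sin (b * t) - sin (dampedFreqSlope μ * t * r)| / b) ^ 2
      ≤ (1 + r) ^ (-(μ * t)) * (μ ^ 2 / (4 - μ ^ 2) * t * r) ^ 2 := by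
        gcongr
        · exact div_nonneg (abs_nonneg _) dampedFreq_nonneg
        · exact abs_sin_sub_sin_div_dampedFreq_le hμ ht hr
    _ = (μ ^ 2 / (4 - μ ^ 2) * t) ^ 2 * (r ^ 2 * (1 + r) ^ (-(μ * t))) := by ring

end DampedFreq

theorem stmt11_general (n : ℕ) (μ : ℝ) (hμ : μ ∈ Set.Ioo (0:ℝ) 2) :
    let b : ℝ → ℝ := fun r => Real.sqrt (r ^ 2 - μ ^ 2 / 4 * Real.log (1 + r) ^ 2)
    let γ : ℝ := Real.sqrt (4 - μ ^ 2) / 2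
    let ν : ℝ → EuclideanSpace ℝ (Fin n) → ℝ := fun t ξ =>
      (1 + ‖ξ‖) ^ (-(μ * t) / 2) * (1 / b ‖ξ‖) * Real.sin (b ‖ξ‖ * t)
    let χ : ℝ → EuclideanSpace ℝ (Fin n) → ℝ := fun t ξ =>
      (1 + ‖ξ‖) ^ (-(μ * t) / 2) * (1 / b ‖ξ‖) * Real.sin (γ * t * ‖ξ‖)
    ∃ C t₀ : ℝ, 0 < C ∧ 0 < t₀ ∧ ∀ t : ℝ, t₀ ≤ t →
      (∫ ξ : EuclideanSpace ℝ (Fin n), |ν t ξ - χ t ξ| ^ 2) ≤ C * t ^ (-(n : ℝ)) := by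
  intro b γ ν χ
  obtain ⟨hμ0, hμ2⟩ := hμ
  have hμsq : μ ^ 2 < 4 := by nlinarith
  set K := μ ^ 2 / (4 - μ ^ 2)
  set s₀ : ℝ := n + 3
  set I := ∫ ξ : EuclideanSpace ℝ (Fin n), ‖ξ‖ ^ 2 * (1 + ‖ξ‖ / s₀) ^ (-s₀)
  have hI : 0 ≤ I := integral_nonneg fun ξ ↦ by positivity
  refine ⟨K ^ 2 * μ ^ (-(n + 2 : ℝ)) * I + 1, s₀ / μ, by positivity, by positivity, fun t ht ↦ ?_⟩
  have htpos : 0 < t := (by positivity : 0 < s₀ / μ).trans_le ht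
  have hs : s₀ ≤ μ * t := by rwa [div_le_iff₀' hμ0] at ht
  have hdim : finrank ℝ (EuclideanSpace ℝ (Fin n)) + ((2 : ℕ) : ℝ) < s₀ := by
    rw [finrank_euclideanSpace_fin]; push_cast; linarith
  have htpow : t ^ 2 * t ^ (-(n + 2 : ℝ)) = t ^ (-(n : ℝ)) := by
    rw [← rpow_natCast, ← rpow_add htpos]; push_cast; ring_nf
  calc ∫ ξ, |ν t ξ - χ t ξ| ^ 2
      ≤ ∫ ξ : EuclideanSpace ℝ (Fin n), (K * t) ^ 2 * (‖ξ‖ ^ 2 * (1 + ‖ξ‖) ^ (-(μ * t))) :=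
        integral_mono_of_nonneg (.of_forall fun ξ ↦ by positivity)
          ((integrable_norm_pow_mul_one_add_norm_rpow_neg volume 2 (hdim.trans_le hs)).const_mul _)
          (.of_forall fun ξ ↦ sq_abs_damped_sin_sub_le hμsq htpos.le (norm_nonneg ξ))
    _ = (K * t) ^ 2 * ∫ ξ : EuclideanSpace ℝ (Fin n), ‖ξ‖ ^ 2 * (1 + ‖ξ‖) ^ (-(μ * t)) :=
        integral_const_mul _ _
    _ ≤ (K * t) ^ 2 * ((μ * t) ^ (-(n + 2 : ℝ)) * I) := by
        refine mul_le_mul_of_nonneg_left ?_ (sq_nonneg _)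
        simpa [finrank_euclideanSpace_fin] using
          integral_norm_pow_mul_one_add_norm_rpow_neg_le volume 2 hdim hs
    _ = K ^ 2 * μ ^ (-(n + 2 : ℝ)) * I * t ^ (-(n : ℝ)) := by
        rw [mul_rpow hμ0.le htpos.le, ← htpow]; ring
    _ ≤ (K ^ 2 * μ ^ (-(n + 2 : ℝ)) * I + 1) * t ^ (-(n : ℝ)) := by
        gcongr; linarith

/-- For `μ ∈ (0,2)`, the profiles `ν(t,ξ) = (1+r)^{-μt/2} sin(b(r)t)/b(r)` and
`χ(t,ξ) = (1+r)^{-μt/2} sin(γtr)/b(r)` (with `r = |ξ|`) satisfy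
`∫ |ν - χ|² dξ ≤ C t^{-n}` for large `t`. -/
theorem stmt11 (n : ℕ) (hn : 1 ≤ n) (μ : ℝ) (hμ : μ ∈ Set.Ioo (0:ℝ) 2) :
    let b : ℝ → ℝ := fun r => Real.sqrt (r ^ 2 - μ ^ 2 / 4 * Real.log (1 + r) ^ 2)
    let γ : ℝ := Real.sqrt (4 - μ ^ 2) / 2
    let ν : ℝ → EuclideanSpace ℝ (Fin n) → ℝ := fun t ξ =>
      (1 + ‖ξ‖) ^ (-(μ * t) / 2) * (1 / b ‖ξ‖) * Real.sin (b ‖ξ‖ * t)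
    let χ : ℝ → EuclideanSpace ℝ (Fin n) → ℝ := fun t ξ =>
      (1 + ‖ξ‖) ^ (-(μ * t) / 2) * (1 / b ‖ξ‖) * Real.sin (γ * t * ‖ξ‖)
    ∃ C t₀ : ℝ, 0 < C ∧ 0 < t₀ ∧ ∀ t : ℝ, t₀ ≤ t →
      (∫ ξ : EuclideanSpace ℝ (Fin n), |ν t ξ - χ t ξ| ^ 2) ≤ C * t ^ (-(n : ℝ)) :=
  stmt11_general n μ hμ
end

section
/- Let n ≥ 1, μ > 2, let δ > 0 be the unique positive root of μ log(1+δ) = 2δ, and let δ₁ ∈ (0, min{μ/2 - 1, δ}]. For ξ with 0 < |ξ| ≤ δ₁ write r := |ξ|, h(r) := μ² log²(1+r) - 4r², λ±(r) := (-μ log(1+r) ± √(h(r)))/2, and define ν(t,ξ) := (e^{λ₊(r)t} - e^{λ₋(r)t})/√(h(r)). Then there exist constants C₁ > 0, C₂ > 0 and t₀ > 0, depending on n and μ, such that for all t ≥ t₀: C₁ t^{2-n} ≤ ∫_{|ξ| ≤ δ₁} |ν(t,ξ)|² dξ ≤ C₂ t^{2-n}. -/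
/-!
For `0 < r ≤ δ₁` one has `2r < μ log(1+r)`, so `λ±(r)` are the two negative roots of
`λ² + μ log(1+r) λ + r² = 0`; since `λ₊ λ₋ = r²` and `|λ₋| ≤ μ log(1+r) ≤ μr`, `λ₊ ≤ -r/μ`.
Convexity of `exp` gives `ν(t,ξ) ≤ t e^{λ₊ t} ≤ t e^{-t|ξ|/μ}`, and `sinh x ≥ x` gives
`ν(t,ξ) ≥ t e^{-μ log(1+r) t/2} ≥ t e^{-μ/2}` once `t|ξ| ≤ 1`.
Integrating `ν²` over the shell `1/(2t) < |ξ| ≤ 1/t` bounds the integral below by `c t² t^{-n}`;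
dominating `ν²` by `t² e^{-2t|ξ|/μ}` and substituting `ξ = x/t` bounds it above by `C t² t^{-n}`.
-/

open MeasureTheory Metric Real

lemma exp_sub_exp_le_sub_mul_exp (x y : ℝ) : exp y - exp x ≤ (y - x) * exp y := by
  have hx : exp x = exp (x - y) * exp y := by rw [← exp_add, sub_add_cancel]
  nlinarith [add_one_le_exp (x - y), exp_pos y]

lemma sub_mul_exp_midpoint_le_exp_sub_exp {x y : ℝ} (hxy : x ≤ y) :
    (y - x) * exp ((x + y) / 2) ≤ exp y - exp x := by
  have hy : exp y = exp ((x + y) / 2) * exp ((y - x) / 2) := by rw [← exp_add]; ring_nf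
  have hx : exp x = exp ((x + y) / 2) * exp (-((y - x) / 2)) := by rw [← exp_add]; ring_nf
  calc (y - x) * exp ((x + y) / 2) = 2 * exp ((x + y) / 2) * ((y - x) / 2) := by ring
    _ ≤ 2 * exp ((x + y) / 2) * sinh ((y - x) / 2) := by
      gcongr; exact self_le_sinh_iff.mpr (by linarith)
    _ = exp y - exp x := by rw [hy, hx, sinh_eq]; ring

lemma two_mul_lt_mul_log_one_add {μ r : ℝ} (hr : 0 < r) (hμ : 2 * (1 + r) ≤ μ) :
    2 * r < μ * log (1 + r) := by
  have h1r : 0 < 1 + r := by linarith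
  have hlog : r / (1 + r) < log (1 + r) := by
    have h := log_lt_sub_one_of_pos (inv_pos.mpr h1r) (inv_ne_one.mpr (by linarith))
    have hinv : (1 + r)⁻¹ - 1 = -(r / (1 + r)) := by field_simp; ring
    rw [log_inv, hinv] at h
    linarith
  calc 2 * r = 2 * (1 + r) * (r / (1 + r)) := by field_simp
    _ ≤ μ * (r / (1 + r)) := by gcongr
    _ < μ * log (1 + r) := by gcongr; linarith

lemma neg_add_sqrt_sq_sub_div_two_le {a b : ℝ} (ha : 0 < a) (hb : 0 ≤ b) (hba : b ≤ a ^ 2) :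
    (-a + √(a ^ 2 - b)) / 2 ≤ -(b / (4 * a)) := by
  set s := √(a ^ 2 - b)
  have hs : s ^ 2 = a ^ 2 - b := sq_sqrt (by linarith)
  have hsa : s ≤ a := by nlinarith [sqrt_nonneg (a ^ 2 - b)]
  have key : b ≤ 4 * a * ((a - s) / 2) := by nlinarith
  have : b / (4 * a) ≤ (a - s) / 2 := by rw [div_le_iff₀ (by positivity)]; linarith
  linarith

-- `h(r)` is the discriminant of `λ² + μ log(1+r) λ + r²`, whose roots are `λ±(r)`.
noncomputable def disc (μ r : ℝ) : ℝ := μ ^ 2 * log (1 + r) ^ 2 - 4 * r ^ 2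

noncomputable def nuRadial (μ t r : ℝ) : ℝ :=
  (exp ((-(μ * log (1 + r)) + √(disc μ r)) / 2 * t) -
    exp ((-(μ * log (1 + r)) - √(disc μ r)) / 2 * t)) / √(disc μ r)

section NuRadial

variable {μ r t : ℝ}

lemma nuRadial_nonneg (ht : 0 ≤ t) : 0 ≤ nuRadial μ t r := by
  have hs := sqrt_nonneg (disc μ r)
  exact div_nonneg (sub_nonneg.mpr (exp_le_exp.mpr (by nlinarith))) hs

lemma nuRadial_le (hr : 0 ≤ r) (hμ : 2 * (1 + r) ≤ μ) (ht : 0 ≤ t) :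
    nuRadial μ t r ≤ t * exp (-(t * r / μ)) := by
  rcases hr.eq_or_lt with rfl | hr
  · simp only [nuRadial, disc, add_zero, log_one]
    norm_num
    positivity
  have hlog := two_mul_lt_mul_log_one_add hr hμ
  have hlog_le : log (1 + r) ≤ r := by linarith [log_le_sub_one_of_pos (by linarith : 0 < 1 + r)]
  have hdisc : disc μ r = (μ * log (1 + r)) ^ 2 - 4 * r ^ 2 := by rw [disc]; ring
  have hs : 0 < √(disc μ r) := sqrt_pos.mpr (by rw [hdisc]; nlinarith)
  have hlp : (-(μ * log (1 + r)) + √(disc μ r)) / 2 ≤ -(r / μ) := by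
    have hμ0 : 0 < μ := by linarith
    calc (-(μ * log (1 + r)) + √(disc μ r)) / 2 ≤ -(4 * r ^ 2 / (4 * (μ * log (1 + r)))) := by
          rw [hdisc]
          exact neg_add_sqrt_sq_sub_div_two_le (by linarith) (by positivity) (by nlinarith)
      _ ≤ -(r / μ) := by
          rw [neg_le_neg_iff, div_le_div_iff₀ hμ0 (by linarith)]
          nlinarith [mul_le_mul_of_nonneg_left hlog_le (by positivity : 0 ≤ 4 * r * μ)]
  calc nuRadial μ t r ≤ t * exp ((-(μ * log (1 + r)) + √(disc μ r)) / 2 * t) := by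
        rw [nuRadial, div_le_iff₀ hs]
        refine (exp_sub_exp_le_sub_mul_exp _ _).trans_eq ?_
        ring
    _ ≤ t * exp (-(t * r / μ)) := by
        gcongr
        calc _ ≤ -(r / μ) * t := mul_le_mul_of_nonneg_right hlp ht
          _ = -(t * r / μ) := by ring

lemma mul_exp_neg_le_nuRadial (hr : 0 < r) (hμ : 2 * (1 + r) ≤ μ) (ht : 0 ≤ t)
    (hrt : t * r ≤ 1) : t * exp (-(μ / 2)) ≤ nuRadial μ t r := by
  have hlog := two_mul_lt_mul_log_one_add hr hμ
  have hlog_le : log (1 + r) ≤ r := by linarith [log_le_sub_one_of_pos (by linarith : 0 < 1 + r)]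
  have hs : 0 < √(disc μ r) := sqrt_pos.mpr (by rw [disc]; nlinarith)
  have hμt : μ * log (1 + r) * t ≤ μ := by
    have hμ0 : 0 < μ := by linarith
    calc μ * log (1 + r) * t ≤ μ * (t * r) := by
          nlinarith [mul_le_mul_of_nonneg_right hlog_le (mul_nonneg hμ0.le ht)]
      _ ≤ μ := by nlinarith
  rw [nuRadial, le_div_iff₀ hs]
  refine le_trans ?_ (sub_mul_exp_midpoint_le_exp_sub_exp (by nlinarith))
  calc t * exp (-(μ / 2)) * √(disc μ r)
      ≤ t * exp (-(μ * log (1 + r) * t / 2)) * √(disc μ r) := by gcongr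
    _ = _ := by ring_nf

end NuRadial

lemma pow_mul_exp_neg_mul_le {c s : ℝ} (hc : 0 < c) (hs : 0 ≤ s) (l : ℕ) :
    s ^ l * exp (-(c * s)) ≤ (l.factorial : ℝ) / c ^ l := by
  have h := pow_div_factorial_le_exp (c * s) (by positivity) l
  rw [div_le_iff₀ (by positivity), mul_pow] at h
  rw [le_div_iff₀ (by positivity), exp_neg]
  calc s ^ l * (exp (c * s))⁻¹ * c ^ l = (c ^ l * s ^ l) * (exp (c * s))⁻¹ := by ring
    _ ≤ (exp (c * s) * l.factorial) * (exp (c * s))⁻¹ := by gcongr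
    _ = l.factorial := by field_simp

section AddHaar

variable {E : Type*} [NormedAddCommGroup E] [NormedSpace ℝ E] [FiniteDimensional ℝ E]
  [MeasurableSpace E] [BorelSpace E] (ρ : Measure E) [ρ.IsAddHaarMeasure]

lemma integrable_exp_neg_mul_norm {c : ℝ} (hc : 0 < c) :
    Integrable (fun x => exp (-(c * ‖x‖))) ρ := by
  have h := integrable_of_le_of_pow_mul_le (μ := ρ) (f := fun x => exp (-(c * ‖x‖))) (k := 0)
    (C₁ := 1) (C₂ := (ρ.integrablePower.factorial : ℝ) / c ^ ρ.integrablePower)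
    (fun x => by simpa using mul_nonneg hc.le (norm_nonneg x))
    (fun x => by simpa using pow_mul_exp_neg_mul_le hc (norm_nonneg x) _)
    (by fun_prop)
  simpa using h

lemma integral_comp_mul_norm {F : Type*} [NormedAddCommGroup F] [NormedSpace ℝ F]
    (f : ℝ → F) {t : ℝ} (ht : 0 < t) :
    ∫ x, f (t * ‖x‖) ∂ρ = (t ^ Module.finrank ℝ E)⁻¹ • ∫ x, f ‖x‖ ∂ρ := by
  simpa [norm_smul, abs_of_pos ht] using
    ρ.integral_comp_smul_of_nonneg (fun x => f ‖x‖) t (hR := ht.le)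

lemma measureReal_closedBall_sdiff_closedBall (x : E) {r R : ℝ} (hr : 0 ≤ r) (hrR : r ≤ R) :
    ρ.real (closedBall x R \ closedBall x r) =
      (R ^ Module.finrank ℝ E - r ^ Module.finrank ℝ E) * ρ.real (ball 0 1) := by
  rw [measureReal_sdiff (closedBall_subset_closedBall hrR) measurableSet_closedBall
      measure_closedBall_lt_top.ne, ρ.addHaar_real_closedBall x (hr.trans hrR),
    ρ.addHaar_real_closedBall x hr, sub_mul]

end AddHaar

lemma rpow_two_sub_natCast {t : ℝ} (ht : 0 < t) (n : ℕ) :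
    t ^ ((2 : ℝ) - n) = t ^ 2 * (t ^ n)⁻¹ := by
  rw [rpow_sub_natCast ht.ne', rpow_two, div_eq_mul_inv]

section Integrals

variable {n : ℕ} {μ δ₁ t : ℝ}

lemma sq_abs_nuRadial_le {r : ℝ} (hr : 0 ≤ r) (hμ : 2 * (1 + r) ≤ μ) (ht : 0 ≤ t) :
    |nuRadial μ t r| ^ 2 ≤ t ^ 2 * exp (-(2 / μ * (t * r))) := by
  rw [abs_of_nonneg (nuRadial_nonneg ht)]
  calc nuRadial μ t r ^ 2 ≤ (t * exp (-(t * r / μ))) ^ 2 := by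
        gcongr
        · exact nuRadial_nonneg ht
        · exact nuRadial_le hr hμ ht
    _ = t ^ 2 * exp (-(2 / μ * (t * r))) := by rw [mul_pow, ← exp_nat_mul]; ring_nf

lemma sq_abs_nuRadial_le_of_mem_closedBall (hμ : 2 * (1 + δ₁) ≤ μ) (ht : 0 ≤ t)
    {ξ : EuclideanSpace ℝ (Fin n)} (hξ : ξ ∈ closedBall 0 δ₁) :
    |nuRadial μ t ‖ξ‖| ^ 2 ≤ t ^ 2 * exp (-(2 / μ * (t * ‖ξ‖))) := by
  rw [mem_closedBall_zero_iff] at hξ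
  exact sq_abs_nuRadial_le (norm_nonneg ξ) (by linarith) ht

lemma integrableOn_sq_abs_nuRadial (hδ₁ : 0 ≤ δ₁) (hμ : 2 * (1 + δ₁) ≤ μ) (ht : 0 < t) :
    IntegrableOn (fun ξ : EuclideanSpace ℝ (Fin n) => |nuRadial μ t ‖ξ‖| ^ 2)
      (closedBall 0 δ₁) := by
  have hμ0 : 0 < μ := by linarith
  have hmeas : Measurable (nuRadial μ t) := by unfold nuRadial disc; fun_prop
  refine Integrable.mono' ((integrable_exp_neg_mul_norm volume
    (by positivity : 0 < 2 / μ * t)).const_mul (t ^ 2)).integrableOn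
    ((hmeas.comp measurable_norm).abs.pow_const 2).aestronglyMeasurable ?_
  rw [ae_restrict_iff' measurableSet_closedBall]
  refine .of_forall fun ξ hξ => ?_
  rw [norm_of_nonneg (by positivity), mul_assoc]
  exact sq_abs_nuRadial_le_of_mem_closedBall hμ ht.le hξ

lemma integral_sq_abs_nuRadial_le (hδ₁ : 0 ≤ δ₁) (hμ : 2 * (1 + δ₁) ≤ μ) (ht : 0 < t) :
    ∫ ξ in closedBall (0 : EuclideanSpace ℝ (Fin n)) δ₁, |nuRadial μ t ‖ξ‖| ^ 2 ≤
      (∫ x : EuclideanSpace ℝ (Fin n), exp (-(2 / μ * ‖x‖))) * t ^ ((2 : ℝ) - n) := by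
  have hμ0 : 0 < μ := by linarith
  have hg : Integrable fun ξ : EuclideanSpace ℝ (Fin n) => t ^ 2 * exp (-(2 / μ * (t * ‖ξ‖))) := by
    simpa only [mul_assoc] using
      (integrable_exp_neg_mul_norm volume (by positivity : 0 < 2 / μ * t)).const_mul (t ^ 2)
  calc ∫ ξ in closedBall 0 δ₁, |nuRadial μ t ‖ξ‖| ^ 2
      ≤ ∫ ξ in closedBall 0 δ₁, t ^ 2 * exp (-(2 / μ * (t * ‖ξ‖))) :=
        setIntegral_mono_on (integrableOn_sq_abs_nuRadial hδ₁ hμ ht) hg.integrableOn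
          measurableSet_closedBall fun ξ hξ => sq_abs_nuRadial_le_of_mem_closedBall hμ ht.le hξ
    _ ≤ ∫ ξ, t ^ 2 * exp (-(2 / μ * (t * ‖ξ‖))) :=
        setIntegral_le_integral hg (.of_forall fun _ => by positivity)
    _ = (∫ x : EuclideanSpace ℝ (Fin n), exp (-(2 / μ * ‖x‖))) * t ^ ((2 : ℝ) - n) := by
        rw [integral_const_mul, integral_comp_mul_norm volume (fun s => exp (-(2 / μ * s))) ht,
          finrank_euclideanSpace_fin, smul_eq_mul, rpow_two_sub_natCast ht]
        ring

lemma le_integral_sq_abs_nuRadial (hμ : 2 * (1 + δ₁) ≤ μ) (hδ₁ : 0 < δ₁) (ht : δ₁⁻¹ ≤ t) :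
    exp (-μ) * (1 - (1 / 2) ^ n) * volume.real (ball (0 : EuclideanSpace ℝ (Fin n)) 1) *
        t ^ ((2 : ℝ) - n) ≤
      ∫ ξ in closedBall (0 : EuclideanSpace ℝ (Fin n)) δ₁, |nuRadial μ t ‖ξ‖| ^ 2 := by
  have ht0 : 0 < t := (inv_pos.mpr hδ₁).trans_le ht
  have htδ₁ : t⁻¹ ≤ δ₁ := inv_le_of_inv_le₀ hδ₁ ht
  have hshell : t⁻¹ / 2 ≤ t⁻¹ := by linarith [inv_pos.mpr ht0]
  set shell := closedBall (0 : EuclideanSpace ℝ (Fin n)) t⁻¹ \ closedBall 0 (t⁻¹ / 2)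
  have hsub : shell ⊆ closedBall 0 δ₁ := Set.sdiff_subset.trans (closedBall_subset_closedBall htδ₁)
  have hbound : ∀ ξ ∈ shell, exp (-μ) * t ^ 2 ≤ |nuRadial μ t ‖ξ‖| ^ 2 := by
    rintro ξ ⟨hξ, hξ'⟩
    rw [mem_closedBall_zero_iff] at hξ
    rw [mem_closedBall_zero_iff, not_le] at hξ'
    have hr : 0 < ‖ξ‖ := lt_trans (by positivity) hξ'
    have hrt : t * ‖ξ‖ ≤ 1 := by rwa [← le_div_iff₀' ht0, one_div]
    calc exp (-μ) * t ^ 2 = (t * exp (-(μ / 2))) ^ 2 := by rw [mul_pow, ← exp_nat_mul]; ring_nf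
      _ ≤ |nuRadial μ t ‖ξ‖| ^ 2 := by
        rw [sq_abs]
        gcongr
        exact mul_exp_neg_le_nuRadial hr (by linarith [hξ.trans htδ₁]) ht0.le hrt
  have hint := integrableOn_sq_abs_nuRadial (n := n) hδ₁.le hμ ht0
  calc exp (-μ) * (1 - (1 / 2) ^ n) * volume.real (ball (0 : EuclideanSpace ℝ (Fin n)) 1) *
        t ^ ((2 : ℝ) - n)
      = ∫ _ in shell, exp (-μ) * t ^ 2 := by
        rw [setIntegral_const, smul_eq_mul,
          measureReal_closedBall_sdiff_closedBall volume 0 (by positivity) hshell,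
          finrank_euclideanSpace_fin, rpow_two_sub_natCast ht0,
          show t⁻¹ / 2 = 1 / 2 * t⁻¹ by ring, mul_pow, inv_pow]
        ring
    _ ≤ ∫ ξ in shell, |nuRadial μ t ‖ξ‖| ^ 2 :=
        setIntegral_mono_on (integrableOn_const
          ((measure_mono hsub).trans_lt measure_closedBall_lt_top).ne)
          (hint.mono_set hsub) (measurableSet_closedBall.diff measurableSet_closedBall) hbound
    _ ≤ ∫ ξ in closedBall 0 δ₁, |nuRadial μ t ‖ξ‖| ^ 2 :=
        setIntegral_mono_set hint (.of_forall fun _ => by positivity) (LE.le.eventuallyLE hsub)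

end Integrals

theorem stmt18_general (n : ℕ) (hn : 1 ≤ n) (μ δ δ₁ : ℝ)
    (hδ₁ : 0 < δ₁) (hδ₁le : δ₁ ≤ min (μ / 2 - 1) δ) :
    let h : ℝ → ℝ := fun r => μ ^ 2 * Real.log (1 + r) ^ 2 - 4 * r ^ 2
    let lp : ℝ → ℝ := fun r => (-(μ * Real.log (1 + r)) + Real.sqrt (h r)) / 2
    let lm : ℝ → ℝ := fun r => (-(μ * Real.log (1 + r)) - Real.sqrt (h r)) / 2
    let ν : ℝ → EuclideanSpace ℝ (Fin n) → ℝ := fun t ξ =>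
      (Real.exp (lp ‖ξ‖ * t) - Real.exp (lm ‖ξ‖ * t)) / Real.sqrt (h ‖ξ‖)
    ∃ C₁ C₂ t₀ : ℝ, 0 < C₁ ∧ 0 < C₂ ∧ 0 < t₀ ∧ ∀ t : ℝ, t₀ ≤ t →
      C₁ * t ^ ((2 : ℝ) - n) ≤
        (∫ ξ in Metric.closedBall (0 : EuclideanSpace ℝ (Fin n)) δ₁, |ν t ξ| ^ 2) ∧
      (∫ ξ in Metric.closedBall (0 : EuclideanSpace ℝ (Fin n)) δ₁, |ν t ξ| ^ 2) ≤
        C₂ * t ^ ((2 : ℝ) - n) := by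
  intro h lp lm ν
  have hμ : 2 * (1 + δ₁) ≤ μ := by linarith [min_le_left (μ / 2 - 1) δ]
  have hμ0 : 0 < μ := by linarith
  have hball : 0 < volume.real (ball (0 : EuclideanSpace ℝ (Fin n)) 1) :=
    ENNReal.toReal_pos (measure_ball_pos _ _ one_pos).ne' measure_ball_lt_top.ne
  have hhalf : (1 / 2 : ℝ) ^ n < 1 := pow_lt_one₀ (by norm_num) (by norm_num) (by omega)
  refine ⟨exp (-μ) * (1 - (1 / 2) ^ n) * volume.real (ball (0 : EuclideanSpace ℝ (Fin n)) 1),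
    ∫ x : EuclideanSpace ℝ (Fin n), exp (-(2 / μ * ‖x‖)), δ₁⁻¹, ?_,
    integral_exp_pos (integrable_exp_neg_mul_norm volume (by positivity)), inv_pos.mpr hδ₁,
    fun t ht => ⟨le_integral_sq_abs_nuRadial hμ hδ₁ ht,
      integral_sq_abs_nuRadial_le hδ₁.le hμ ((inv_pos.mpr hδ₁).trans_le ht)⟩⟩
  have : 0 < 1 - (1 / 2 : ℝ) ^ n := by linarith
  positivity

/-- Estimates (4.3) and (4.5) (`μ > 2`): the profile
`ν(t,ξ) = (e^{λ₊t} - e^{λ₋t})/√(h(r))` (with `r = |ξ|`) satisfies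
`C₁ t^{2-n} ≤ ∫_{|ξ| ≤ δ₁} |ν(t,ξ)|² dξ ≤ C₂ t^{2-n}` for large `t`. -/
theorem stmt18 (n : ℕ) (hn : 1 ≤ n) (μ δ δ₁ : ℝ) (hμ : 2 < μ) (hδ : 0 < δ)
    (hroot : μ * Real.log (1 + δ) = 2 * δ)
    (hδ₁ : 0 < δ₁) (hδ₁le : δ₁ ≤ min (μ / 2 - 1) δ) :
    let h : ℝ → ℝ := fun r => μ ^ 2 * Real.log (1 + r) ^ 2 - 4 * r ^ 2
    let lp : ℝ → ℝ := fun r => (-(μ * Real.log (1 + r)) + Real.sqrt (h r)) / 2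
    let lm : ℝ → ℝ := fun r => (-(μ * Real.log (1 + r)) - Real.sqrt (h r)) / 2
    let ν : ℝ → EuclideanSpace ℝ (Fin n) → ℝ := fun t ξ =>
      (Real.exp (lp ‖ξ‖ * t) - Real.exp (lm ‖ξ‖ * t)) / Real.sqrt (h ‖ξ‖)
    ∃ C₁ C₂ t₀ : ℝ, 0 < C₁ ∧ 0 < C₂ ∧ 0 < t₀ ∧ ∀ t : ℝ, t₀ ≤ t →
      C₁ * t ^ ((2 : ℝ) - n) ≤
        (∫ ξ in Metric.closedBall (0 : EuclideanSpace ℝ (Fin n)) δ₁, |ν t ξ| ^ 2) ∧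
      (∫ ξ in Metric.closedBall (0 : EuclideanSpace ℝ (Fin n)) δ₁, |ν t ξ| ^ 2) ≤
        C₂ * t ^ ((2 : ℝ) - n) :=
  stmt18_general n hn μ δ δ₁ hδ₁ hδ₁le
end
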